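/- Let ℓ_μ ∈ (0,∞) and assume μ : ℝ → ℝ satisfies condition (A2)(ii): there exist c ∈ (0,∞), k ∈ ℕ and points −∞ = ξ₀ < ξ₁ < … < ξ_k < ξ_{k+1} = ∞ such that for every i ∈ {1,…,k+1} and all x, y ∈ (ξ_{i−1}, ξ_i), |μ(x)−μ(y)| ≤ c·(1+|x|^{ℓ_μ}+|y|^{ℓ_μ})·|x−y|. Then there exists c' ∈ (0,∞) such that for all n ∈ ℕ with n ≥ 1 and all x ∈ ℝ, |μ_n(x) − μ(x)| ≤ (c'/√n)·(1 + |x|^{2ℓ_μ+1}). -/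

import Mathlib

/-!
Since `y / (1 + a) - y = -y a / (1 + a)`, taming moves `μ x` by at most `|μ x| |x|^ℓ / √n`.
Comparing `μ x` with `μ p` for a fixed point `p` of the piece containing `x` gives
`|μ x| ≤ C (1 + |x|)^(ℓ+1)` on that piece; there are finitely many pieces and breakpoints, so one
constant works on all of `ℝ`. Finally `(1 + |x|)^(2ℓ+1) ≤ 2^(2ℓ) (1 + |x|^(2ℓ+1))` by convexity.
-/

/-- For `ξ₁ < … < ξ_k` and `i ∈ {0,…,k}`, `piece k ξ i` is the open interval
`(ξ_i, ξ_{i+1})` of the partition of `ℝ`, with the conventions `ξ₀ = -∞`, `ξ_{k+1} = ∞`. -/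
def piece (k : ℕ) (ξ : Fin k → ℝ) (i : Fin (k + 1)) : Set ℝ :=
  {x : ℝ | (∀ j : Fin k, (j : ℕ) < (i : ℕ) → ξ j < x) ∧
    ∀ j : Fin k, (i : ℕ) ≤ (j : ℕ) → x < ξ j}

/-- The tamed coefficient `f_n(x) = f(x) / (1 + n^{-1/2} |x|^ℓ)`. -/
noncomputable def tame (f : ℝ → ℝ) (ℓ : ℝ) (n : ℕ) (x : ℝ) : ℝ :=
  f x / (1 + (1 / Real.sqrt (n : ℝ)) * |x| ^ ℓ)

lemma abs_div_one_add_sub_le (y : ℝ) {a : ℝ} (ha : 0 ≤ a) : |y / (1 + a) - y| ≤ |y| * a := by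
  have h : y / (1 + a) - y = -(y * a / (1 + a)) := by field_simp; ring
  rw [h, abs_neg, abs_div, abs_mul, abs_of_nonneg ha, abs_of_pos (by linarith : (0 : ℝ) < 1 + a)]
  exact div_le_self (by positivity) (by linarith)

lemma abs_tame_sub_le (f : ℝ → ℝ) (ℓ : ℝ) (n : ℕ) (x : ℝ) :
    |tame f ℓ n x - f x| ≤ |f x| * |x| ^ ℓ / Real.sqrt n :=
  calc |tame f ℓ n x - f x| ≤ |f x| * (1 / Real.sqrt n * |x| ^ ℓ) :=
        abs_div_one_add_sub_le _ (by positivity)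
    _ = |f x| * |x| ^ ℓ / Real.sqrt n := by ring

lemma one_add_rpow_le {t : ℝ} (ht : 0 ≤ t) {p : ℝ} (hp : 1 ≤ p) :
    (1 + t) ^ p ≤ 2 ^ (p - 1) * (1 + t ^ p) := by
  have h := NNReal.rpow_add_le_mul_rpow_add_rpow 1 t.toNNReal hp
  rw [← NNReal.coe_le_coe] at h
  push_cast [Real.coe_toNNReal _ ht] at h
  simpa using h

lemma abs_le_mul_one_add_abs_rpow_of_abs_sub_le {f : ℝ → ℝ} {ℓ c p x : ℝ} (hℓ : 0 ≤ ℓ)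
    (hc : 0 ≤ c)
    (h : |f x - f p| ≤ c * (1 + |x| ^ ℓ + |p| ^ ℓ) * |x - p|) :
    |f x| ≤ (|f p| + c * (2 + |p| ^ ℓ) * (1 + |p|)) * (1 + |x|) ^ (ℓ + 1) := by
  have hx : 1 ≤ 1 + |x| := le_add_of_nonneg_right (abs_nonneg x)
  have hxℓ : 1 ≤ (1 + |x|) ^ ℓ := Real.one_le_rpow hx hℓ
  have hweight : 1 + |x| ^ ℓ + |p| ^ ℓ ≤ (2 + |p| ^ ℓ) * (1 + |x|) ^ ℓ := by
    have : |x| ^ ℓ ≤ (1 + |x|) ^ ℓ := Real.rpow_le_rpow (abs_nonneg x) (by linarith) hℓ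
    nlinarith [Real.rpow_nonneg (abs_nonneg p) ℓ]
  have hdist : |x - p| ≤ (1 + |p|) * (1 + |x|) := by
    nlinarith [abs_sub x p, abs_nonneg x, abs_nonneg p]
  have hpow : (1 + |x|) ^ (ℓ + 1) = (1 + |x|) ^ ℓ * (1 + |x|) :=
    Real.rpow_add_one (by positivity) ℓ
  have hfp : |f p| ≤ |f p| * (1 + |x|) ^ (ℓ + 1) :=
    le_mul_of_one_le_right (abs_nonneg _) (Real.one_le_rpow hx (by linarith))
  calc |f x| ≤ |f p| + |f x - f p| := by linarith [abs_sub_abs_le_abs_sub (f x) (f p)]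
    _ ≤ |f p| * (1 + |x|) ^ (ℓ + 1)
          + c * ((2 + |p| ^ ℓ) * (1 + |x|) ^ ℓ) * ((1 + |p|) * (1 + |x|)) := by
        gcongr
        exact h.trans (by gcongr)
    _ = (|f p| + c * (2 + |p| ^ ℓ) * (1 + |p|)) * (1 + |x|) ^ (ℓ + 1) := by
        rw [hpow]; ring

lemma exists_abs_le_mul_one_add_abs_rpow_on {f : ℝ → ℝ} {ℓ c : ℝ} (hℓ : 0 ≤ ℓ) (hc : 0 ≤ c)
    {s : Set ℝ} (hf : ∀ x ∈ s, ∀ y ∈ s, |f x - f y| ≤ c * (1 + |x| ^ ℓ + |y| ^ ℓ) * |x - y|) :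
    ∃ C, ∀ x ∈ s, |f x| ≤ C * (1 + |x|) ^ (ℓ + 1) := by
  rcases s.eq_empty_or_nonempty with rfl | ⟨p, hp⟩
  · exact ⟨0, by simp⟩
  · exact ⟨_, fun x hx => abs_le_mul_one_add_abs_rpow_of_abs_sub_le hℓ hc (hf x hx p hp)⟩

lemma exists_pos_forall_le_mul_of_cover {ι α : Type*} [Finite ι] {s : ι → Set α}
    (hs : ∀ x, ∃ i, x ∈ s i) {f g : α → ℝ} (hg : ∀ x, 0 ≤ g x)
    (h : ∀ i, ∃ C, ∀ x ∈ s i, f x ≤ C * g x) : ∃ C > 0, ∀ x, f x ≤ C * g x := by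
  choose C hC using h
  obtain ⟨D, hD⟩ := Finite.exists_le C
  refine ⟨max D 1, by positivity, fun x => ?_⟩
  obtain ⟨i, hi⟩ := hs x
  exact (hC i x hi).trans (mul_le_mul_of_nonneg_right ((hD i).trans (le_max_left _ _)) (hg x))

lemma exists_mem_piece {k : ℕ} {ξ : Fin k → ℝ} (hξ : StrictMono ξ) {x : ℝ}
    (hx : ∀ j, x ≠ ξ j) : ∃ i, x ∈ piece k ξ i := by
  classical
  have hk : ∃ m, ∀ j : Fin k, m ≤ (j : ℕ) → x < ξ j :=
    ⟨k, fun j hj => absurd j.2 (by omega)⟩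
  have hle : Nat.find hk ≤ k := Nat.find_min' hk fun j hj => absurd j.2 (by omega)
  refine ⟨⟨Nat.find hk, by omega⟩, fun j hj => ?_, Nat.find_spec hk⟩
  obtain ⟨j', hjj', hj'⟩ : ∃ j' : Fin k, (j : ℕ) ≤ j' ∧ ξ j' ≤ x := by
    simpa using Nat.find_min hk hj
  exact lt_of_le_of_ne ((hξ.monotone hjj').trans hj') (hx j).symm

lemma exists_pos_abs_le_mul_one_add_abs_rpow_of_piecewise {f : ℝ → ℝ} {ℓ c : ℝ} (hℓ : 0 ≤ ℓ)
    (hc : 0 ≤ c) {k : ℕ} {ξ : Fin k → ℝ} (hξ : StrictMono ξ)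
    (hf : ∀ i, ∀ x ∈ piece k ξ i, ∀ y ∈ piece k ξ i,
      |f x - f y| ≤ c * (1 + |x| ^ ℓ + |y| ^ ℓ) * |x - y|) :
    ∃ C > 0, ∀ x, |f x| ≤ C * (1 + |x|) ^ (ℓ + 1) := by
  refine exists_pos_forall_le_mul_of_cover (s := Sum.elim (piece k ξ) fun j => {ξ j})
    (fun x => ?_) (fun x => by positivity) ?_
  · by_cases hx : ∀ j, x ≠ ξ j
    · obtain ⟨i, hi⟩ := exists_mem_piece hξ hx
      exact ⟨.inl i, hi⟩
    · obtain ⟨j, rfl⟩ := not_forall_not.1 hx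
      exact ⟨.inr j, rfl⟩
  · rintro (i | j)
    · exact exists_abs_le_mul_one_add_abs_rpow_on hℓ hc (hf i)
    · refine exists_abs_le_mul_one_add_abs_rpow_on hℓ hc ?_
      rintro x rfl y rfl
      simp

/-- If `μ` satisfies (A2)(ii) with `ℓμ ∈ (0,∞)`, then there is
`c' ∈ (0,∞)` such that for all `n ≥ 1` and all `x`,
`|μ_n(x) - μ(x)| ≤ (c'/√n)·(1 + |x|^{2ℓμ+1})`. -/
theorem stmt_17 (ℓμ : ℝ) (hℓμ : 0 < ℓμ)
    (μ : ℝ → ℝ)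
    (c : ℝ) (hc : 0 < c) (k : ℕ) (ξ : Fin k → ℝ) (hξ : StrictMono ξ)
    (hA2ii : ∀ i : Fin (k + 1), ∀ x ∈ piece k ξ i, ∀ y ∈ piece k ξ i,
      |μ x - μ y| ≤ c * (1 + |x| ^ ℓμ + |y| ^ ℓμ) * |x - y|) :
    ∃ c' : ℝ, 0 < c' ∧ ∀ n : ℕ, 1 ≤ n → ∀ x : ℝ,
      |tame μ ℓμ n x - μ x| ≤ c' / Real.sqrt (n : ℝ) * (1 + |x| ^ (2 * ℓμ + 1)) := by
  obtain ⟨C, hC, hμ⟩ := exists_pos_abs_le_mul_one_add_abs_rpow_of_piecewise hℓμ.le hc.le hξ hA2ii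
  refine ⟨C * 2 ^ (2 * ℓμ), by positivity, fun n _ x => ?_⟩
  have hx : 0 ≤ |x| := abs_nonneg x
  have hgrowth : |μ x| * |x| ^ ℓμ ≤ C * 2 ^ (2 * ℓμ) * (1 + |x| ^ (2 * ℓμ + 1)) :=
    calc |μ x| * |x| ^ ℓμ ≤ C * (1 + |x|) ^ (ℓμ + 1) * (1 + |x|) ^ ℓμ := by
          gcongr
          · exact hμ x
          · linarith
      _ = C * (1 + |x|) ^ (2 * ℓμ + 1) := by
          rw [mul_assoc, ← Real.rpow_add (by positivity)]
          ring_nf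
      _ ≤ C * (2 ^ (2 * ℓμ) * (1 + |x| ^ (2 * ℓμ + 1))) := by
          gcongr
          simpa using one_add_rpow_le hx (p := 2 * ℓμ + 1) (by linarith)
      _ = C * 2 ^ (2 * ℓμ) * (1 + |x| ^ (2 * ℓμ + 1)) := by ring
  calc |tame μ ℓμ n x - μ x| ≤ |μ x| * |x| ^ ℓμ / Real.sqrt n := abs_tame_sub_le μ ℓμ n x
    _ ≤ C * 2 ^ (2 * ℓμ) * (1 + |x| ^ (2 * ℓμ + 1)) / Real.sqrt n := by gcongr
    _ = C * 2 ^ (2 * ℓμ) / Real.sqrt n * (1 + |x| ^ (2 * ℓμ + 1)) := by ring
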